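/- Let (X, δ) be a diversity with induced metric d, and let Y ⊆ X be nonempty and bounded with respect to d. Suppose r assigns to each finite subset of Y a real number, with r(∅) = 0, and satisfies δ(⋃_{A∈𝒜} A) ≤ Σ_{A∈𝒜} r(A) for every finite collection 𝒜 of finite subsets of Y. Then the extension of r to all finite subsets A of X defined by r(A) = r(A ∩ Y) + Σ_{a ∈ A \ Y} r_a(Y) satisfies δ(⋃_{A∈𝒜} A) ≤ Σ_{A∈𝒜} r(A) for every finite collection 𝒜 of finite subsets of X. -/

import Mathlib

/-- A diversity on `X`: a real-valued function on finite subsets of `X` which is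
nonnegative, vanishes exactly on sets of cardinality at most one, and satisfies the
triangle inequality `δ(A ∪ C) ≤ δ(A ∪ B) + δ(B ∪ C)` for nonempty `B`. -/
structure Diversity (X : Type*) [DecidableEq X] where
  delta : Finset X → ℝ
  nonneg : ∀ A, 0 ≤ delta A
  eq_zero_iff : ∀ A, delta A = 0 ↔ A.card ≤ 1
  triangle : ∀ A B C : Finset X, B.Nonempty →
    delta (A ∪ C) ≤ delta (A ∪ B) + delta (B ∪ C)

namespace Diversity

variable {X : Type*} [DecidableEq X]

/-- A diversity is hyperconvex if for every `r : ⟨X⟩ → ℝ` with `r ∅ = 0` such that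
`δ(⋃_{A ∈ 𝒜} A) ≤ ∑_{A ∈ 𝒜} r A` for every finite collection `𝒜` of finite subsets
of `X`, there is `z ∈ X` with `δ({z} ∪ Y) ≤ r Y` for all finite `Y ⊆ X`. -/
def Hyperconvex (D : Diversity X) : Prop :=
  ∀ r : Finset X → ℝ, r ∅ = 0 →
    (∀ 𝒜 : Finset (Finset X), D.delta (𝒜.sup id) ≤ ∑ A ∈ 𝒜, r A) →
    ∃ z : X, ∀ Y : Finset X, D.delta (insert z Y) ≤ r Y

/-- A diversity is bounded if its values are uniformly bounded above. -/
def Bounded (D : Diversity X) : Prop :=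
  ∃ M : ℝ, 0 ≤ M ∧ ∀ A : Finset X, D.delta A ≤ M

end Diversity

open Classical in
/-- The Chebyshev radius of a set `Y ⊆ X` with respect to `x ∈ X`, for the metric
induced by a diversity: `r_x(Y) = sup_{y ∈ Y} d(x, y)`. -/
noncomputable def Diversity.chebRadius {X : Type*} [DecidableEq X]
    (D : Diversity X) (x : X) (Y : Set X) : ℝ :=
  sSup ((fun y => D.delta {x, y}) '' Y)

/-! Split `⋃ 𝒜 = S ∪ T` with `S ⊆ Y` and `T` disjoint from `Y`. Using the triangle inequality
with a fixed middle point `y ∈ Y` (in `S` if `S` is nonempty), the points of `T` are attached one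
at a time: `δ(S ∪ T) ≤ δ(S) + ∑_{a ∈ T} d(y, a) ≤ δ(S) + ∑_{a ∈ T} r_a(Y)`. The hypothesis on `r`,
applied to the traces `A ∩ Y`, bounds `δ(S)`; since all terms are nonnegative, both sums are
dominated by the corresponding sums over `A ∈ 𝒜`. -/

namespace Finset

variable {α ι : Type*} [DecidableEq α]

theorem filter_sup_id (p : α → Prop) [DecidablePred p] (𝒜 : Finset (Finset α)) :
    (𝒜.sup id).filter p = 𝒜.sup (·.filter p) :=
  apply_sup_eq_sup_comp (filter p) (filter_union p) (filter_empty p)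

theorem sum_union_le_of_nonneg {f : α → ℝ} (hf : ∀ x, 0 ≤ f x) (s t : Finset α) :
    ∑ x ∈ s ∪ t, f x ≤ ∑ x ∈ s, f x + ∑ x ∈ t, f x :=
  (le_add_of_nonneg_right (sum_nonneg fun x _ => hf x)).trans_eq sum_union_inter

theorem sum_sup_le_sum_sum_of_nonneg {f : α → ℝ} (hf : ∀ x, 0 ≤ f x)
    (t : Finset ι) (s : ι → Finset α) :
    ∑ x ∈ t.sup s, f x ≤ ∑ i ∈ t, ∑ x ∈ s i, f x :=
  apply_sup_le_sum (f := fun B => ∑ x ∈ B, f x) sum_empty (sum_union_le_of_nonneg hf _ _) t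

end Finset

namespace Diversity

variable {X : Type*} [DecidableEq X] (D : Diversity X)

theorem delta_singleton (x : X) : D.delta {x} = 0 :=
  (D.eq_zero_iff _).mpr (Finset.card_singleton x).le

theorem delta_le_delta_insert (A : Finset X) (b : X) : D.delta A ≤ D.delta (insert b A) := by
  have h := D.triangle A {b} ∅ (Finset.singleton_nonempty b)
  rwa [Finset.union_empty, Finset.union_empty, D.delta_singleton, add_zero, Finset.union_comm,
    ← Finset.insert_eq] at h

theorem delta_pair_triangle (a y z : X) :
    D.delta {a, z} ≤ D.delta {a, y} + D.delta {y, z} :=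
  D.triangle {a} {y} {z} (Finset.singleton_nonempty y)

theorem delta_union_le_add_sum {S : Finset X} {y : X} (hy : y ∈ S) (T : Finset X) :
    D.delta (S ∪ T) ≤ D.delta S + ∑ a ∈ T, D.delta {y, a} := by
  induction T using Finset.induction_on with
  | empty => simp
  | insert a T ha ih =>
    have hstep := D.triangle (S ∪ T) {y} {a} (Finset.singleton_nonempty y)
    rw [Finset.union_eq_left.mpr (Finset.singleton_subset_iff.mpr (Finset.mem_union_left T hy)),
      Finset.union_comm, ← Finset.insert_eq, ← Finset.union_insert] at hstep
    rw [Finset.sum_insert ha]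
    calc D.delta (S ∪ insert a T) ≤ D.delta (S ∪ T) + D.delta {y, a} := hstep
      _ ≤ D.delta S + (D.delta {y, a} + ∑ a ∈ T, D.delta {y, a}) := by linarith

theorem delta_le_sum_delta_pair (y : X) (T : Finset X) :
    D.delta T ≤ ∑ a ∈ T, D.delta {y, a} :=
  calc D.delta T ≤ D.delta ({y} ∪ T) := by
        simpa only [← Finset.insert_eq] using D.delta_le_delta_insert T y
    _ ≤ ∑ a ∈ T, D.delta {y, a} := by
        simpa [D.delta_singleton] using D.delta_union_le_add_sum (Finset.mem_singleton_self y) T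

section ChebRadius

variable {Y : Set X}

theorem delta_pair_le_chebRadius
    (hYbd : ∃ M : ℝ, ∀ y ∈ Y, ∀ z ∈ Y, D.delta {y, z} ≤ M) {y : X} (hy : y ∈ Y) (a : X) :
    D.delta {a, y} ≤ D.chebRadius a Y := by
  obtain ⟨M, hM⟩ := hYbd
  have hbdd : BddAbove ((fun z => D.delta {a, z}) '' Y) := by
    refine ⟨D.delta {a, y} + M, ?_⟩
    rintro _ ⟨z, hz, rfl⟩
    linarith [D.delta_pair_triangle a y z, hM y hy z hz]
  exact le_csSup hbdd ⟨y, hy, rfl⟩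

theorem chebRadius_nonneg
    (hYbd : ∃ M : ℝ, ∀ y ∈ Y, ∀ z ∈ Y, D.delta {y, z} ≤ M) (hYne : Y.Nonempty)
    (a : X) : 0 ≤ D.chebRadius a Y :=
  (D.nonneg _).trans (D.delta_pair_le_chebRadius hYbd hYne.some_mem a)

theorem delta_le_delta_filter_add_sum_chebRadius
    (hYbd : ∃ M : ℝ, ∀ y ∈ Y, ∀ z ∈ Y, D.delta {y, z} ≤ M) (hYne : Y.Nonempty)
    [DecidablePred (· ∈ Y)] (U : Finset X) :
    D.delta U ≤ D.delta (U.filter (· ∈ Y)) + ∑ a ∈ U.filter (· ∉ Y), D.chebRadius a Y := by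
  set S := U.filter (· ∈ Y)
  set T := U.filter (· ∉ Y)
  suffices D.delta (S ∪ T) ≤ D.delta S + ∑ a ∈ T, D.chebRadius a Y by
    rwa [Finset.filter_union_filter_not_eq] at this
  have hcost : ∀ y ∈ Y, ∑ a ∈ T, D.delta {y, a} ≤ ∑ a ∈ T, D.chebRadius a Y :=
    fun y hy => Finset.sum_le_sum fun a _ => by
      rw [Finset.pair_comm]
      exact D.delta_pair_le_chebRadius hYbd hy a
  rcases S.eq_empty_or_nonempty with hS | ⟨y, hyS⟩
  · rw [hS, Finset.empty_union]
    obtain ⟨y, hy⟩ := hYne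
    linarith [D.delta_le_sum_delta_pair y T, hcost y hy, D.nonneg ∅]
  · linarith [D.delta_union_le_add_sum hyS T, hcost y (Finset.mem_filter.mp hyS).2]

end ChebRadius

theorem delta_filter_sup_le_sum {Y : Set X} [DecidablePred (· ∈ Y)] {r : Finset X → ℝ}
    (hr : ∀ 𝒜 : Finset (Finset X), (∀ A ∈ 𝒜, (A : Set X) ⊆ Y) →
      D.delta (𝒜.sup id) ≤ ∑ A ∈ 𝒜, r A)
    (𝒜 : Finset (Finset X)) :
    D.delta ((𝒜.sup id).filter (· ∈ Y)) ≤ ∑ A ∈ 𝒜, r (A.filter (· ∈ Y)) := by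
  have hsub : ∀ A : Finset X, (↑(A.filter (· ∈ Y)) : Set X) ⊆ Y := fun A x hx =>
    (Finset.mem_filter.mp hx).2
  have hr_nonneg : ∀ B : Finset X, (B : Set X) ⊆ Y → 0 ≤ r B := fun B hB =>
    (D.nonneg B).trans (by simpa using hr {B} (by simpa using hB))
  calc D.delta ((𝒜.sup id).filter (· ∈ Y))
      = D.delta ((𝒜.image (·.filter (· ∈ Y))).sup id) := by
        rw [Finset.filter_sup_id, Finset.sup_image]; rfl
    _ ≤ ∑ B ∈ 𝒜.image (·.filter (· ∈ Y)), r B :=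
        hr _ fun B hB => by
          obtain ⟨A, -, rfl⟩ := Finset.mem_image.mp hB
          exact hsub A
    _ ≤ ∑ A ∈ 𝒜, r (A.filter (· ∈ Y)) :=
        Finset.sum_image_le_of_nonneg fun B hB => by
          obtain ⟨A, -, rfl⟩ := Finset.mem_image.mp hB
          exact hr_nonneg _ (hsub A)

end Diversity

open Classical in
theorem extension_satisfies_hyperconvexity_condition_general
    {X : Type*} [DecidableEq X] (D : Diversity X)
    (Y : Set X) (hYne : Y.Nonempty)
    (hYbd : ∃ M : ℝ, ∀ y ∈ Y, ∀ z ∈ Y, D.delta {y, z} ≤ M)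
    (r : Finset X → ℝ)
    (hr : ∀ 𝒜 : Finset (Finset X), (∀ A ∈ 𝒜, (A : Set X) ⊆ Y) →
      D.delta (𝒜.sup id) ≤ ∑ A ∈ 𝒜, r A)
    (r' : Finset X → ℝ)
    (hr' : ∀ A : Finset X,
      r' A = r (A.filter (fun a => a ∈ Y)) +
        ∑ a ∈ A.filter (fun a => a ∉ Y), D.chebRadius a Y) :
    ∀ 𝒜 : Finset (Finset X), D.delta (𝒜.sup id) ≤ ∑ A ∈ 𝒜, r' A := by
  intro 𝒜
  have houtside : ∑ a ∈ (𝒜.sup id).filter (· ∉ Y), D.chebRadius a Y ≤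
      ∑ A ∈ 𝒜, ∑ a ∈ A.filter (· ∉ Y), D.chebRadius a Y := by
    rw [Finset.filter_sup_id]
    exact Finset.sum_sup_le_sum_sum_of_nonneg (D.chebRadius_nonneg hYbd hYne) _ _
  calc D.delta (𝒜.sup id)
      ≤ D.delta ((𝒜.sup id).filter (· ∈ Y)) +
          ∑ a ∈ (𝒜.sup id).filter (· ∉ Y), D.chebRadius a Y :=
        D.delta_le_delta_filter_add_sum_chebRadius hYbd hYne _
    _ ≤ ∑ A ∈ 𝒜, r (A.filter (· ∈ Y)) + ∑ A ∈ 𝒜, ∑ a ∈ A.filter (· ∉ Y), D.chebRadius a Y :=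
        add_le_add (D.delta_filter_sup_le_sum hr 𝒜) houtside
    _ = ∑ A ∈ 𝒜, r' A := by
        rw [← Finset.sum_add_distrib]
        exact Finset.sum_congr rfl fun A _ => (hr' A).symm

open Classical in
/-- Let `(X, δ)` be a diversity, `Y ⊆ X` nonempty and bounded for the
induced metric, and let `r` on finite subsets of `Y` satisfy `r ∅ = 0` and the
hyperconvexity inequality for all finite collections of finite subsets of `Y`. Then the
extension of `r` to all finite subsets of `X` given by
`r'(A) = r(A ∩ Y) + ∑_{a ∈ A \ Y} r_a(Y)` satisfies the hyperconvexity inequality for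
all finite collections of finite subsets of `X`. -/
theorem extension_satisfies_hyperconvexity_condition
    {X : Type*} [DecidableEq X] (D : Diversity X)
    (Y : Set X) (hYne : Y.Nonempty)
    (hYbd : ∃ M : ℝ, ∀ y ∈ Y, ∀ z ∈ Y, D.delta {y, z} ≤ M)
    (r : Finset X → ℝ) (hr0 : r ∅ = 0)
    (hr : ∀ 𝒜 : Finset (Finset X), (∀ A ∈ 𝒜, (A : Set X) ⊆ Y) →
      D.delta (𝒜.sup id) ≤ ∑ A ∈ 𝒜, r A)
    (r' : Finset X → ℝ)
    (hr' : ∀ A : Finset X,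
      r' A = r (A.filter (fun a => a ∈ Y)) +
        ∑ a ∈ A.filter (fun a => a ∉ Y), D.chebRadius a Y) :
    ∀ 𝒜 : Finset (Finset X), D.delta (𝒜.sup id) ≤ ∑ A ∈ 𝒜, r' A :=
  extension_satisfies_hyperconvexity_condition_general D Y hYne hYbd r hr r' hr'
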